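/- For every k ≥ 2, the constant term (coefficient of q^0) of the power series f_k equals −B_k/(2k), where B_k denotes the k-th Bernoulli number. -/

import Mathlib

open PowerSeries Finset

noncomputable section

/-- `ℚ[[q]]` -/
abbrev QQ : Type := PowerSeries ℚ
/-- `(ℚ[[q]])[[z]]` -/
abbrev QQZ : Type := PowerSeries QQ

/-- The rank of a partition: largest part minus number of parts. -/
def Nat.Partition.rank {n : ℕ} (p : n.Partition) : ℤ :=
  (p.parts.sup : ℤ) - (Multiset.card p.parts : ℤ)

/-- `N(m,n)`: the number of partitions of `n` with rank `m`. -/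
def Nrk (m : ℤ) (n : ℕ) : ℕ := Nat.card {p : n.Partition // p.rank = m}

/-- The `k`-th rank moment `R_k(q) = ∑_{n≥0} (∑_m m^k N(m,n)) q^n`. -/
def Rmom (k : ℕ) : QQ :=
  PowerSeries.mk fun n => ∑ m ∈ Finset.Icc (-(n : ℤ)) (n : ℤ), (m : ℚ) ^ k * (Nrk m n : ℚ)

/-- The crank of a partition. -/
def Nat.Partition.crank {n : ℕ} (p : n.Partition) : ℤ :=
  if p.parts.count 1 = 0 then (p.parts.sup : ℤ)
  else ((Multiset.card (p.parts.filter fun x => p.parts.count 1 < x)) : ℤ)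
        - (p.parts.count 1 : ℤ)

/-- `M(m,n)`: crank counts, with the exceptional values at `n = 1`. -/
def Mcr (m : ℤ) (n : ℕ) : ℤ :=
  if n = 1 then (if m = 1 ∨ m = -1 then 1 else if m = 0 then -1 else 0)
  else (Nat.card {p : n.Partition // p.crank = m} : ℤ)

/-- The `k`-th crank moment `C_k(q) = ∑_{n≥0} (∑_m m^k M(m,n)) q^n`. -/
def Cmom (k : ℕ) : QQ :=
  PowerSeries.mk fun n => ∑ m ∈ Finset.Icc (-(n : ℤ)) (n : ℤ), (m : ℚ) ^ k * (Mcr m n : ℚ)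

/-- `(q)_∞ = ∏_{n≥1} (1 - q^n)`, defined coefficientwise via its stable truncations. -/
def qPoch : QQ :=
  PowerSeries.mk fun m =>
    PowerSeries.coeff m (∏ n ∈ Finset.Icc 1 m, (1 - (PowerSeries.X : QQ) ^ n))

/-- `S(z) = ∑_{n≥0} z^(2n)/(4^n (2n+1)!)`, the power series of `2 sinh(z/2)/z`. -/
def Sz {R : Type*} [CommRing R] [Algebra ℚ R] : PowerSeries R :=
  PowerSeries.mk fun m =>
    if Even m then algebraMap ℚ R ((4 ^ (m / 2) * (m + 1).factorial : ℚ))⁻¹ else 0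

/-- Formal exponential of a power series (with zero constant term) over a `ℚ`-algebra. -/
def pexp {R : Type*} [CommRing R] [Algebra ℚ R] (F : PowerSeries R) : PowerSeries R :=
  PowerSeries.mk fun m =>
    ∑ n ∈ Finset.range (m + 1), (n.factorial : ℚ)⁻¹ • PowerSeries.coeff m (F ^ n)

/-- `φ(λ) = ∏_j 2^(m_j)/(m_j! (j!)^(m_j))` where `m_j` is the number of parts equal to `j`. -/
def phiP {n : ℕ} (p : n.Partition) : ℚ :=
  ∏ j ∈ Finset.Icc 1 n,
    (2 : ℚ) ^ (p.parts.count j) /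
      ((p.parts.count j).factorial * (j.factorial : ℚ) ^ (p.parts.count j))

/-- `h_λ = ∏_j h_j^(m_j)`. -/
def prodPow {n : ℕ} (h : ℕ → QQ) (p : n.Partition) : QQ :=
  ∏ j ∈ Finset.Icc 1 n, h j ^ (p.parts.count j)

/-- The partition trace `Tr_n(φ,h) = ∑_{λ ⊢ n} φ(λ) h_λ`. -/
def Trphi (h : ℕ → QQ) (n : ℕ) : QQ :=
  ∑ p : n.Partition, PowerSeries.C (phiP p) * prodPow h p

/-- The partition trace `Tr_n(ψ,h)` with `ψ(λ) = (-1)^(m_1+⋯+m_n) φ(λ)`. -/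
def Trpsi (h : ℕ → QQ) (n : ℕ) : QQ :=
  ∑ p : n.Partition,
    PowerSeries.C ((-1) ^ (Multiset.card p.parts) * phiP p) * prodPow h p

/-- The Eisenstein series `G_k = -B_k/(2k) + ∑_{n,m≥1} m^(k-1) q^(nm)` for even `k ≥ 2`,
and `G_k = 0` otherwise. -/
def Gk (k : ℕ) : QQ :=
  if 2 ≤ k ∧ Even k then
    PowerSeries.mk fun r =>
      if r = 0 then -(bernoulli k : ℚ) / (2 * k)
      else ∑ p ∈ Nat.divisorsAntidiagonal r, (p.2 : ℚ) ^ (k - 1)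
  else 0

/-- The Eisenstein-type series `g_ℓ`. -/
def gl (l : ℕ) : QQ :=
  if l = 0 then 1
  else if Odd l then 0
  else
    PowerSeries.mk fun r =>
      if r = 0 then ((1 : ℚ) - 2 ^ (l - 1)) * (bernoulli l : ℚ) / (2 * l)
      else
        (∑ p ∈ Nat.divisorsAntidiagonal r,
          if 3 * (p.2 : ℤ) ≤ 2 * (p.1 : ℤ) - 1 then ((2 * (p.1 : ℤ) - 3 * (p.2 : ℤ) : ℤ) : ℚ) ^ (l - 1) else 0)
        - (∑ p ∈ Nat.divisorsAntidiagonal r,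
          if 6 * (p.2 : ℤ) ≤ (p.1 : ℤ) - 1 then (((p.1 : ℤ) - 6 * (p.2 : ℤ) : ℤ) : ℚ) ^ (l - 1) else 0)

/-- The derivation `D = q d/dq` on `ℚ[[q]]`. -/
def Dq (f : QQ) : QQ := PowerSeries.mk fun n => (n : ℚ) * PowerSeries.coeff n f

/-- `∑_{k≥0} R_k(q) z^k/k!`. -/
def Rgen : QQZ := PowerSeries.mk fun k => (k.factorial : ℚ)⁻¹ • Rmom k

/-- `∑_{k≥0} C_k(q) z^k/k!`. -/
def Cgen : QQZ := PowerSeries.mk fun k => (k.factorial : ℚ)⁻¹ • Cmom k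

/-- The defining identity of the sequence `(f_k)`:
`∑_{k≥0} R_k(q) z^k/k! = S(z) (q)_∞⁻¹ exp(2 ∑_{k≥1} f_k z^k/k!)`. -/
def fHyp (f : ℕ → QQ) : Prop :=
  Rgen = Sz * PowerSeries.C (R := QQ) qPoch⁻¹ *
    pexp (PowerSeries.mk fun k => if k = 0 then 0 else (2 * (k.factorial : ℚ)⁻¹) • f k)


/-! At `q = 0` the rank moments reduce to `R_0 = 1`, `R_k = 0` for `k ≥ 1`, and `(q)_∞ = 1`, so
the defining identity specializes to `S(z) · exp (2 ∑ f_k(0) z^k/k!) = 1`. Since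
`z S(z) = e^{z/2} - e^{-z/2}`, the logarithmic derivative of `S` is
`½ coth(z/2) - 1/z = ∑_{k≥2} B_k z^{k-1}/k!`, so `log S(z) = ∑_{k≥2} B_k z^k/(k·k!)`, and
comparing coefficients of `z^k` gives `2 f_k(0)/k! = -B_k/(k·k!)`. -/

namespace PowerSeries

theorem coeff_pow_eq_zero_of_lt {R : Type*} [CommSemiring R] {F : R⟦X⟧}
    (hF : constantCoeff F = 0) {m n : ℕ} (h : m < n) : coeff m (F ^ n) = 0 :=
  X_pow_dvd_iff.mp (pow_dvd_pow_of_dvd (X_dvd_iff.mpr hF) n) m h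

theorem derivative_rescale {R : Type*} [CommSemiring R] (a : R) (f : R⟦X⟧) :
    d⁄dX R (rescale a f) = C a * rescale a (d⁄dX R f) := by
  ext n
  simp only [coeff_derivative, coeff_rescale, coeff_C_mul, pow_succ]
  ring

section

variable {A : Type*} [CommRing A] [Algebra ℚ A]

theorem pexp_eq_subst_exp {F : A⟦X⟧} (hF : constantCoeff F = 0) :
    pexp F = (exp A).subst F := by
  ext m
  rw [coeff_subst' (HasSubst.of_constantCoeff_zero' hF),
    finsum_eq_sum_of_support_subset _ (s := range (m + 1)) ?_]
  · simp [pexp, coeff_exp, Algebra.smul_def]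
  · intro n hn
    by_contra h
    simp_all [coeff_pow_eq_zero_of_lt hF (not_lt.mp (mt mem_range.mpr h))]

theorem constantCoeff_pexp (F : A⟦X⟧) : constantCoeff (pexp F) = 1 := by
  rw [← coeff_zero_eq_constantCoeff_apply]
  simp [pexp]

theorem derivative_pexp {F : A⟦X⟧} (hF : constantCoeff F = 0) :
    d⁄dX A (pexp F) = d⁄dX A F * pexp F := by
  rw [pexp_eq_subst_exp hF, derivative_subst (HasSubst.of_constantCoeff_zero' hF),
    derivative_exp, mul_comm]

theorem pexp_injective [IsAddTorsionFree A] {F G : A⟦X⟧} (hF : constantCoeff F = 0)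
    (hG : constantCoeff G = 0) (h : pexp F = pexp G) : F = G := by
  have hunit : IsUnit (pexp F) := isUnit_iff_constantCoeff.mpr (by simp [constantCoeff_pexp])
  refine derivative.ext (hunit.mul_left_injective ?_) (hF.trans hG.symm)
  dsimp only
  rw [← derivative_pexp hF, h, derivative_pexp hG, ← h]

theorem map_pexp {B : Type*} [CommRing B] [Algebra ℚ B] (φ : A →+* B) (F : A⟦X⟧) :
    map φ (pexp F) = pexp (map φ F) := by
  ext m
  simp [pexp, map_sum, map_rat_smul, ← map_pow]

theorem map_Sz {B : Type*} [CommRing B] [Algebra ℚ B] (φ : A →+* B) : map φ Sz = Sz := by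
  ext m
  simp only [Sz, coeff_map, coeff_mk]
  split_ifs
  · exact RingHom.congr_fun (RingHom.ext_rat (φ.comp (algebraMap ℚ A)) (algebraMap ℚ B)) _
  · exact map_zero φ

theorem constantCoeff_Sz : constantCoeff (Sz : A⟦X⟧) = 1 := by
  rw [← coeff_zero_eq_constantCoeff_apply]
  simp [Sz]

end

theorem coeff_Sz_rat (n : ℕ) :
    coeff n (Sz : ℚ⟦X⟧) = if Even n then ((4 ^ (n / 2) * (n + 1).factorial : ℚ))⁻¹ else 0 := by
  simp [Sz]

theorem X_mul_Sz : X * (Sz : ℚ⟦X⟧) = rescale (2⁻¹ : ℚ) (exp ℚ) - rescale (-2⁻¹) (exp ℚ) := by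
  ext (_ | n)
  · simp only [coeff_zero_X_mul, map_sub, coeff_rescale, coeff_exp]
    simp
  · rw [coeff_succ_X_mul, map_sub, coeff_rescale, coeff_rescale, neg_pow, coeff_Sz_rat, coeff_exp,
      Algebra.algebraMap_self, RingHom.id_apply]
    rcases Nat.even_or_odd' n with ⟨k, rfl | rfl⟩
    · rw [if_pos (even_two_mul k), (Nat.odd_iff.mpr (by omega) : Odd (2 * k + 1)).neg_one_pow,
        show 2 * k / 2 = k by omega, pow_succ, pow_mul, show ((2 : ℚ)⁻¹) ^ 2 = 4⁻¹ by norm_num,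
        inv_pow]
      field_simp
      ring
    · rw [if_neg (by simp), (by simp [parity_simps] : Even (2 * k + 1 + 1)).neg_one_pow]
      ring

theorem Sz_add_X_mul_derivative_Sz :
    Sz + X * d⁄dX ℚ Sz = C 2⁻¹ * (rescale (2⁻¹ : ℚ) (exp ℚ) + rescale (-2⁻¹) (exp ℚ)) := by
  have h := congrArg (d⁄dX ℚ) X_mul_Sz
  rw [Derivation.leibniz, map_sub, derivative_rescale, derivative_rescale, derivative_exp,
    derivative_X, smul_eq_mul, smul_eq_mul, mul_one, map_neg] at h
  rw [add_comm, h]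
  ring

def logSz : ℚ⟦X⟧ := mk fun k => if k ≤ 1 then 0 else bernoulli k / (k * k.factorial)

theorem constantCoeff_logSz : constantCoeff logSz = 0 := by
  rw [← coeff_zero_eq_constantCoeff_apply]
  simp [logSz]

theorem X_mul_derivative_logSz :
    X * d⁄dX ℚ logSz = bernoulliPowerSeries ℚ - 1 + C 2⁻¹ * X := by
  ext (_ | _ | n)
  · simp [bernoulliPowerSeries]
  · norm_num [coeff_derivative, logSz, bernoulliPowerSeries]
  · rw [coeff_succ_X_mul, coeff_derivative]
    simp only [logSz, bernoulliPowerSeries, coeff_mk, map_add, map_sub, coeff_one,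
      coeff_succ_mul_X, coeff_succ_C, Algebra.algebraMap_self, RingHom.id_apply]
    simp only [show ¬ n + 1 + 1 ≤ 1 by omega, if_false, Nat.add_eq_zero_iff, one_ne_zero, and_false,
      sub_zero, add_zero]
    push_cast
    field_simp

/-- Multiplied by `z (e^z - 1)`, this is `(z/2) coth(z/2) = z/(e^z - 1) + z/2`. -/
theorem derivative_Sz : d⁄dX ℚ Sz = d⁄dX ℚ logSz * Sz := by
  have hexp : (exp ℚ - 1 : ℚ⟦X⟧) ≠ 0 := fun h => by
    simpa [coeff_exp] using congrArg (coeff 1) h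
  refine mul_left_cancel₀ (mul_ne_zero X_ne_zero hexp) ?_
  set E := rescale (2⁻¹ : ℚ) (exp ℚ)
  set E' := rescale (-2⁻¹ : ℚ) (exp ℚ)
  have hEE : E * E = exp ℚ := by
    rw [exp_mul_exp_eq_exp_add]; norm_num
  have hEE' : E * E' = 1 := by
    rw [exp_mul_exp_eq_exp_add]; simp
  have hC : (C 2⁻¹ : ℚ⟦X⟧) * 2 = 1 := by
    rw [← map_ofNat C 2, ← map_mul]; norm_num
  linear_combination (exp ℚ - 1) * Sz_add_X_mul_derivative_Sz
    - Sz * (exp ℚ - 1) * X_mul_derivative_logSz - Sz * bernoulliPowerSeries_mul_exp_sub_one ℚ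
    - (1 + C 2⁻¹ * (exp ℚ - 1)) * X_mul_Sz + (exp ℚ * E' - E') * hC - E' * hEE + E * hEE'

theorem Sz_mul_pexp_neg_logSz : Sz * pexp (-logSz) = 1 := by
  have hL : constantCoeff (-logSz) = 0 := by rw [map_neg, constantCoeff_logSz, neg_zero]
  refine derivative.ext ?_ (by rw [map_mul, constantCoeff_Sz, constantCoeff_pexp, map_one, one_mul])
  rw [Derivation.leibniz, derivative_pexp hL, derivative_Sz, map_neg, smul_eq_mul, smul_eq_mul,
    derivative_one]
  ring

end PowerSeries

open PowerSeries

theorem Nrk_zero_zero : Nrk 0 0 = 1 := by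
  rw [Nrk, Nat.card_eq_one_iff_unique]
  refine ⟨inferInstance, ⟨⟨default, ?_⟩⟩⟩
  simp [Nat.Partition.rank]

theorem constantCoeff_Rmom (k : ℕ) : constantCoeff (Rmom k) = 0 ^ k := by
  rw [← coeff_zero_eq_constantCoeff_apply]
  simp [Rmom, Nrk_zero_zero]

theorem map_constantCoeff_Rgen : PowerSeries.map constantCoeff Rgen = 1 := by
  ext (_ | k) <;> simp [Rgen, constantCoeff_Rmom, coeff_one]

theorem constantCoeff_qPoch : constantCoeff qPoch = 1 := by
  rw [← coeff_zero_eq_constantCoeff_apply]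
  simp [qPoch]

/-- the constant term of `f_k` is `-B_k/(2k)` for `k ≥ 2`. -/
theorem f_constant_term (f : ℕ → QQ) (hf : fHyp f) (k : ℕ) (hk : 2 ≤ k) :
    PowerSeries.coeff 0 (f k) = -(bernoulli k : ℚ) / (2 * k) := by
  set F : QQZ := mk fun k => if k = 0 then 0 else (2 * (k.factorial : ℚ)⁻¹) • f k
  have hF : constantCoeff (PowerSeries.map constantCoeff F) = 0 := by
    rw [← coeff_zero_eq_constantCoeff_apply]
    simp [F]
  have hq0 : Sz * pexp (PowerSeries.map constantCoeff F) = 1 := by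
    have h := congrArg (PowerSeries.map constantCoeff) hf
    rwa [map_mul, map_mul, map_constantCoeff_Rgen, map_Sz, map_C, constantCoeff_inv,
      constantCoeff_qPoch, inv_one, map_one, mul_one, map_pexp, eq_comm] at h
  have hSz : IsUnit (Sz : ℚ⟦X⟧) := isUnit_iff_constantCoeff.mpr (by simp [constantCoeff_Sz])
  have hlog : PowerSeries.map constantCoeff F = -logSz :=
    pexp_injective hF (by simp [constantCoeff_logSz])
      (hSz.mul_left_cancel (hq0.trans Sz_mul_pexp_neg_logSz.symm))
  have h := congrArg (coeff k) hlog
  simp only [F, logSz, coeff_map, coeff_mk, constantCoeff_smul, smul_eq_mul, map_neg,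
    show k ≠ 0 by omega, show ¬ k ≤ 1 by omega, if_false] at h
  rw [coeff_zero_eq_constantCoeff_apply]
  field_simp at h ⊢
  linear_combination h
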